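/- arXiv:2210.04352 — 2 statements merged into one kernel-verified Lean document; each statement's English description precedes it below -/
import Mathlib

section
/- Let μ_0(t) = (ln t)^{-1} for t > 1, so μ_0'(s) = −1/(s (ln s)^2). Then there exist constants C > 0 and T > e^e such that for all t ≥ T: | μ_0(t)/t + ∫_{t/2}^{t − (ln t)^{-2}} μ_0'(s)/(t−s) ds | ≤ C t^{-1} (ln t)^{-2} ln ln t. -/
/-!
Freeze the coefficient `μ₀'(s)` at `s = t`. Since `∫_{t/2}^{t-δ} ds/(t-s) = log (t/(2δ))`, the cutoff
`δ = (ln t)⁻²` makes the frozen term `-(ln t - ln 2 + 2 ln ln t)/(t (ln t)²)`, whose leading part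
cancels `μ₀(t)/t` exactly. The error of freezing is small because `s (ln s)²` has derivative at most
`2 (ln t)²` on `[t/2, t]`: the integrand changes by `O(1/(t² (ln t)²))`, hence the integral by
`O(1/(t (ln t)²))`, and only `(ln 2 - 2 ln ln t)/(t (ln t)²)` survives.
-/

open Real Set intervalIntegral

theorem integral_inv_sub_left {a b t : ℝ} (ha : a < t) (hb : b < t) :
    ∫ s in a..b, (t - s)⁻¹ = log ((t - a) / (t - b)) := by
  rw [integral_comp_sub_left (fun u => u⁻¹) t, integral_inv_of_pos (by linarith) (by linarith)]

theorem integral_div_sub_eq_add {f : ℝ → ℝ} {a b t : ℝ} (ha : a < t) (hb : b < t)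
    (hf : ContinuousOn f (uIcc a b)) :
    ∫ s in a..b, f s / (t - s) =
      f t * log ((t - a) / (t - b)) + ∫ s in a..b, (f s - f t) / (t - s) := by
  have hne : ∀ s ∈ uIcc a b, t - s ≠ 0 := fun s hs =>
    sub_ne_zero.2 (ne_of_gt (lt_of_le_of_lt hs.2 (max_lt ha hb)))
  have hinv : ContinuousOn (fun s => (t - s)⁻¹) (uIcc a b) :=
    (continuousOn_const.sub continuousOn_id).inv₀ hne
  have hquot : IntervalIntegrable (fun s => f s / (t - s)) MeasureTheory.volume a b :=
    (hf.div (continuousOn_const.sub continuousOn_id) hne).intervalIntegrable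
  have hsplit : (fun s => (f s - f t) / (t - s)) = fun s => f s / (t - s) - f t * (t - s)⁻¹ :=
    funext fun s => by ring
  rw [hsplit, integral_sub hquot (hinv.intervalIntegrable.const_mul _), integral_const_mul,
    integral_inv_sub_left ha hb]
  ring

theorem mul_log_sq_sub_le {s t : ℝ} (hs : 1 ≤ s) (hst : s ≤ t) :
    t * log t ^ 2 - s * log s ^ 2 ≤ (t - s) * (log t ^ 2 + 2 * log t) := by
  have hs0 : 0 < s := by linarith
  have hlog : s * (log t - log s) ≤ t - s := by
    have h := log_le_sub_one_of_pos (div_pos (hs0.trans_le hst) hs0)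
    rw [log_div (by linarith) hs0.ne'] at h
    calc s * (log t - log s) ≤ s * (t / s - 1) := mul_le_mul_of_nonneg_left h hs0.le
      _ = t - s := by field_simp
  have hls : 0 ≤ log s := log_nonneg hs
  have hlst : log s ≤ log t := log_le_log hs0 hst
  calc t * log t ^ 2 - s * log s ^ 2
      = (t - s) * log t ^ 2 + s * (log t - log s) * (log t + log s) := by ring
    _ ≤ (t - s) * log t ^ 2 + (t - s) * (2 * log t) := by
        gcongr
        · linarith
        · linarith
    _ = (t - s) * (log t ^ 2 + 2 * log t) := by ring

theorem abs_one_div_mul_log_sq_sub_le {s t : ℝ} (ht : exp 2 ≤ t) (hs : t / 2 ≤ s) (hst : s ≤ t) :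
    |-(1 / (s * log s ^ 2)) - -(1 / (t * log t ^ 2))| ≤ 16 * (t - s) / (t ^ 2 * log t ^ 2) := by
  have ht0 : 0 < t := (exp_pos 2).trans_le ht
  have hℓ : 2 ≤ log t := (le_log_iff_exp_le ht0).2 ht
  have hs1 : 1 ≤ s := by linarith [add_one_le_exp (2 : ℝ)]
  have hs0 : 0 < s := by linarith
  have hls : log t / 2 ≤ log s := by
    have h := log_le_log (by positivity) hs
    rw [log_div ht0.ne' two_ne_zero] at h
    linarith [log_two_lt_d9]
  have hsmall : t * log t ^ 2 / 8 ≤ s * log s ^ 2 := by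
    calc t * log t ^ 2 / 8 = t / 2 * (log t / 2) ^ 2 := by ring
      _ ≤ s * log s ^ 2 := by gcongr
  have hnum : t * log t ^ 2 - s * log s ^ 2 ≤ (t - s) * (2 * log t ^ 2) := by
    have h2ℓ : (t - s) * (2 * log t) ≤ (t - s) * log t ^ 2 :=
      mul_le_mul_of_nonneg_left (by nlinarith) (by linarith)
    linarith [mul_log_sq_sub_le hs1 hst]
  have hlogs : 0 < log s := by linarith
  have hnum0 : 0 ≤ t * log t ^ 2 - s * log s ^ 2 := by
    have : s * log s ^ 2 ≤ t * log t ^ 2 := by gcongr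
    linarith
  rw [neg_sub_neg, one_div, one_div, abs_sub_comm, inv_sub_inv (by positivity) (by positivity),
    abs_of_nonneg (by positivity)]
  calc (t * log t ^ 2 - s * log s ^ 2) / (s * log s ^ 2 * (t * log t ^ 2))
      ≤ (t - s) * (2 * log t ^ 2) / (t * log t ^ 2 / 8 * (t * log t ^ 2)) := by
        gcongr
    _ = 16 * (t - s) / (t ^ 2 * log t ^ 2) := by field_simp; ring

theorem continuousOn_neg_one_div_mul_log_sq :
    ContinuousOn (fun s : ℝ => -(1 / (s * log s ^ 2))) (Ioi 1) := by
  have hlog : ContinuousOn log (Ioi 1) :=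
    continuousOn_log.mono fun s (hs : 1 < s) => (zero_lt_one.trans hs).ne'
  refine ContinuousOn.neg (continuousOn_const.div (continuousOn_id.mul (hlog.pow 2)) ?_)
  intro s (hs : 1 < s)
  have := log_pos hs
  positivity

theorem exists_abs_le_integral_div_sub_eq_add {t b : ℝ} (ht : exp 2 ≤ t) (hb : t / 2 ≤ b)
    (hbt : b < t) :
    ∃ R, |R| ≤ 8 / (t * log t ^ 2) ∧
      ∫ s in t / 2..b, -(1 / (s * log s ^ 2)) / (t - s) =
        -(1 / (t * log t ^ 2)) * log (t / 2 / (t - b)) + R := by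
  have ht0 : 0 < t := (exp_pos 2).trans_le ht
  have hcont : ContinuousOn (fun s : ℝ => -(1 / (s * log s ^ 2))) (uIcc (t / 2) b) :=
    continuousOn_neg_one_div_mul_log_sq.mono fun s hs => by
      rw [uIcc_of_le hb] at hs
      show 1 < s
      linarith [hs.1, add_one_le_exp (2 : ℝ)]
  refine ⟨∫ s in t / 2..b, (-(1 / (s * log s ^ 2)) - -(1 / (t * log t ^ 2))) / (t - s), ?_, ?_⟩
  · have hpt : ∀ s ∈ uIoc (t / 2) b, ‖(-(1 / (s * log s ^ 2)) - -(1 / (t * log t ^ 2))) / (t - s)‖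
        ≤ 16 / (t ^ 2 * log t ^ 2) := by
      intro s hs
      rw [uIoc_of_le hb] at hs
      have hts : 0 < t - s := by linarith [hs.2]
      rw [norm_div, Real.norm_of_nonneg hts.le, div_le_iff₀ hts]
      exact (abs_one_div_mul_log_sq_sub_le ht hs.1.le (hs.2.trans hbt.le)).trans_eq (by ring)
    calc _ ≤ 16 / (t ^ 2 * log t ^ 2) * |b - t / 2| := norm_integral_le_of_norm_le_const hpt
      _ ≤ 16 / (t ^ 2 * log t ^ 2) * (t / 2) := by
          gcongr
          rw [abs_of_nonneg (by linarith)]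
          linarith
      _ = 8 / (t * log t ^ 2) := by field_simp; ring
  · rw [integral_div_sub_eq_add (by linarith) hbt hcont, show t - t / 2 = t / 2 by ring]

theorem inv_log_div_add_eq {t : ℝ} (ht : t ≠ 0) (hℓ : log t ≠ 0) :
    (log t)⁻¹ / t + -(1 / (t * log t ^ 2)) * log (t / 2 / (t - (t - (log t ^ 2)⁻¹))) =
      (log 2 - 2 * log (log t)) / (t * log t ^ 2) := by
  rw [sub_sub_cancel, div_inv_eq_mul, log_mul (by positivity) (by positivity),
    log_div ht two_ne_zero, log_pow]
  field_simp
  push_cast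
  ring

/-- Cancellation in the nonlocal operator at the leading rate `μ₀(t) = (ln t)⁻¹`,
whose derivative is `μ₀'(s) = -1/(s (ln s)²)`: there are `C > 0` and `T > e^e`
such that for every `t ≥ T`,
`| μ₀(t)/t + ∫_{t/2}^{t - (ln t)⁻²} μ₀'(s)/(t-s) ds | ≤ C t⁻¹ (ln t)⁻² ln ln t`. -/
theorem leading_rate_cancellation :
    ∃ C > (0 : ℝ), ∃ T > Real.exp (Real.exp 1), ∀ t ≥ T,
      |(Real.log t)⁻¹ / t +
          ∫ s in (t / 2)..(t - ((Real.log t) ^ 2)⁻¹),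
            (-(1 / (s * (Real.log s) ^ 2))) / (t - s)| ≤
        C * t⁻¹ * ((Real.log t) ^ 2)⁻¹ * Real.log (Real.log t) := by
  refine ⟨6, by norm_num, exp (exp 2), exp_lt_exp.2 (exp_lt_exp.2 one_lt_two), fun t ht => ?_⟩
  have h3 : (3 : ℝ) ≤ exp 2 := by linarith [add_one_le_exp (2 : ℝ)]
  have ht0 : 0 < t := (exp_pos _).trans_le ht
  have hℓ : exp 2 ≤ log t := (le_log_iff_exp_le ht0).2 ht
  have hℓ0 : 0 < log t := by linarith
  have hL : 2 ≤ log (log t) := (le_log_iff_exp_le hℓ0).2 hℓ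
  have hδ0 : 0 < (log t ^ 2)⁻¹ := by positivity
  have hδ1 : (log t ^ 2)⁻¹ ≤ 1 := inv_le_one_of_one_le₀ (by nlinarith)
  obtain ⟨R, hR, hI⟩ := exists_abs_le_integral_div_sub_eq_add ((exp_le_exp.2 (by linarith)).trans ht)
    (by linarith [add_one_le_exp (exp 2)]) (by linarith : t - (log t ^ 2)⁻¹ < t)
  rw [hI, ← add_assoc, inv_log_div_add_eq ht0.ne' hℓ0.ne']
  have hlead : |log 2 - 2 * log (log t)| ≤ 2 * log (log t) :=
    abs_le.2 ⟨by linarith [log_two_gt_d9], by linarith [log_two_lt_d9]⟩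
  calc _ ≤ 2 * log (log t) / (t * log t ^ 2) + 8 / (t * log t ^ 2) := by
        grw [abs_add_le, abs_div, abs_of_pos (by positivity : 0 < t * log t ^ 2), hlead, hR]
    _ ≤ 6 * t⁻¹ * (log t ^ 2)⁻¹ * log (log t) := by
        rw [← add_div, div_le_iff₀ (by positivity)]
        field_simp
        linarith
end

section
/- Let n ≥ 1 and b > n. There is a constant C = C(n,b) such that for all t > 0 and all x ∈ ℝ^n: (4πt)^{-n/2} ∫_{ℝ^n} e^{-|x−y|^2/(4t)} (1+|y|^2)^{-b/2} dy ≤ C (1+t)^{-n/2} whenever |x|^2 ≤ 1 + t, and ≤ C ( |x|^{-b} + t^{-n/2} e^{-|x|^2/(16t)} ) whenever |x|^2 > 1 + t. -/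
/-!
In dimension `d`, write `G_t(z) = e^{-|z|²/(4t)}`, so that `∫ G_t = (4πt)^{d/2}`, and
`A = ∫ ⟨y⟩^{-b}`, finite as `b > d`. Since `G_t ≤ 1` and `⟨y⟩^{-b} ≤ 1`, the heat evolution of
`⟨·⟩^{-b}` is bounded both by `1` and by `(4πt)^{-d/2} A`, which together give the decay
`(1+t)^{-d/2}`. For the spatial tail, split the integral according to whether `|x - y| < |x|/2`:
there `|y| > |x|/2`, so `⟨y⟩^{-b} ≤ 2^b |x|^{-b}`, and elsewhere `G_t(x - y) ≤ e^{-|x|²/(16t)}`.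
-/

open MeasureTheory Module Real

section Elementary

theorem rpow_neg_mul_rpow_self {a : ℝ} (ha : 0 < a) (s : ℝ) : a ^ (-s) * a ^ s = 1 := by
  rw [rpow_neg ha.le, inv_mul_cancel₀ (by positivity)]

theorem two_rpow_mul_one_add_rpow_neg {t : ℝ} (ht : -1 ≤ t) (s : ℝ) :
    2 ^ s * (1 + t) ^ (-s) = ((1 + t) / 2) ^ (-s) := by
  rw [div_rpow (by linarith) zero_le_two, rpow_neg zero_le_two, div_inv_eq_mul, mul_comm]

theorem one_le_two_rpow_mul_one_add_rpow_neg {t s : ℝ} (ht₀ : -1 < t) (ht₁ : t ≤ 1)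
    (hs : 0 ≤ s) : 1 ≤ 2 ^ s * (1 + t) ^ (-s) := by
  rw [two_rpow_mul_one_add_rpow_neg ht₀.le]
  exact one_le_rpow_of_pos_of_le_one_of_nonpos (by linarith) (by linarith) (by linarith)

theorem rpow_neg_le_two_rpow_mul_one_add_rpow_neg {t s : ℝ} (ht : 1 ≤ t) (hs : 0 ≤ s) :
    t ^ (-s) ≤ 2 ^ s * (1 + t) ^ (-s) := by
  rw [two_rpow_mul_one_add_rpow_neg (by linarith)]
  exact rpow_le_rpow_of_nonpos (by linarith) (by linarith) (by linarith)

theorem rpow_neg_one_add_sq_le {r s b : ℝ} (hr : 0 < r) (hrs : r ≤ s) (hb : 0 ≤ b) :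
    (1 + s ^ 2) ^ (-b / 2) ≤ r ^ (-b) :=
  calc (1 + s ^ 2) ^ (-b / 2) ≤ (r ^ 2) ^ (-b / 2) :=
        rpow_le_rpow_of_nonpos (by positivity) (by nlinarith) (by linarith)
    _ = r ^ (-b) := by
        rw [← rpow_natCast, ← rpow_mul hr.le]
        ring_nf

theorem exp_neg_sq_div_le_of_half_le {t a c : ℝ} (ht : 0 ≤ t) (hc : 0 ≤ c) (hca : c / 2 ≤ a) :
    exp (-a ^ 2 / (4 * t)) ≤ exp (-c ^ 2 / (16 * t)) := by
  rw [exp_le_exp, show -a ^ 2 / (4 * t) = -(4 * a ^ 2) / (16 * t) by field_simp; ring]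
  exact div_le_div_of_nonneg_right (by nlinarith) (by positivity)

theorem exp_mul_rpow_neg_one_add_norm_sq_le {E : Type*} [SeminormedAddCommGroup E]
    {t b : ℝ} (ht : 0 ≤ t) (hb : 0 ≤ b) (x y : E) :
    exp (-‖x - y‖ ^ 2 / (4 * t)) * (1 + ‖y‖ ^ 2) ^ (-b / 2) ≤
      2 ^ b * ‖x‖ ^ (-b) * exp (-‖x - y‖ ^ 2 / (4 * t)) +
        exp (-‖x‖ ^ 2 / (16 * t)) * (1 + ‖y‖ ^ 2) ^ (-b / 2) := by
  rcases lt_or_ge ‖x - y‖ (‖x‖ / 2) with hnear | hfar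
  · have hx : 0 < ‖x‖ / 2 := (norm_nonneg _).trans_lt hnear
    have hy : ‖x‖ / 2 ≤ ‖y‖ := by linarith [norm_sub_norm_le x y]
    have hpow : (‖x‖ / 2) ^ (-b) = 2 ^ b * ‖x‖ ^ (-b) := by
      rw [div_rpow (norm_nonneg x) zero_le_two, rpow_neg zero_le_two, div_inv_eq_mul, mul_comm]
    calc exp (-‖x - y‖ ^ 2 / (4 * t)) * (1 + ‖y‖ ^ 2) ^ (-b / 2)
        ≤ exp (-‖x - y‖ ^ 2 / (4 * t)) * (2 ^ b * ‖x‖ ^ (-b)) := by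
          rw [← hpow]
          exact mul_le_mul_of_nonneg_left (rpow_neg_one_add_sq_le hx hy hb) (exp_nonneg _)
      _ ≤ _ := by rw [mul_comm]; exact le_add_of_nonneg_right (by positivity)
  · calc exp (-‖x - y‖ ^ 2 / (4 * t)) * (1 + ‖y‖ ^ 2) ^ (-b / 2)
        ≤ exp (-‖x‖ ^ 2 / (16 * t)) * (1 + ‖y‖ ^ 2) ^ (-b / 2) :=
          mul_le_mul_of_nonneg_right
            (exp_neg_sq_div_le_of_half_le ht (norm_nonneg x) hfar) (by positivity)
      _ ≤ _ := le_add_of_nonneg_left (by positivity)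

end Elementary

section Heat

variable {V : Type*} [NormedAddCommGroup V] [InnerProductSpace ℝ V] [FiniteDimensional ℝ V]
  [MeasurableSpace V] [BorelSpace V]

theorem integral_exp_neg_norm_sub_sq_div {t : ℝ} (ht : 0 < t) (x : V) :
    ∫ y, exp (-‖x - y‖ ^ 2 / (4 * t)) = (4 * π * t) ^ ((finrank ℝ V : ℝ) / 2) := by
  have hG : ∀ z : V, -‖z‖ ^ 2 / (4 * t) = -(4 * t)⁻¹ * ‖z‖ ^ 2 := fun z => by ring
  simp_rw [hG]
  rw [integral_sub_left_eq_self (fun z : V => exp (-(4 * t)⁻¹ * ‖z‖ ^ 2)) volume x,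
    GaussianFourier.integral_rexp_neg_mul_sq_norm (by positivity)]
  congr 1
  field_simp

theorem integrable_exp_neg_norm_sub_sq_div {t : ℝ} (ht : 0 < t) (x : V) :
    Integrable fun y : V => exp (-‖x - y‖ ^ 2 / (4 * t)) :=
  .of_integral_ne_zero (by rw [integral_exp_neg_norm_sub_sq_div ht]; positivity)

noncomputable def heatSemigroup (t : ℝ) (f : V → ℝ) (x : V) : ℝ :=
  (4 * π * t) ^ (-(finrank ℝ V : ℝ) / 2) * ∫ y, exp (-‖x - y‖ ^ 2 / (4 * t)) * f y

theorem heatSemigroup_le_one {t : ℝ} (ht : 0 < t) {f : V → ℝ} (hf₀ : ∀ y, 0 ≤ f y)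
    (hf₁ : ∀ y, f y ≤ 1) (x : V) : heatSemigroup t f x ≤ 1 := by
  have hint : ∫ y, exp (-‖x - y‖ ^ 2 / (4 * t)) * f y ≤ (4 * π * t) ^ ((finrank ℝ V : ℝ) / 2) := by
    rw [← integral_exp_neg_norm_sub_sq_div ht x]
    refine integral_mono_of_nonneg (.of_forall fun y => mul_nonneg (exp_nonneg _) (hf₀ y))
      (integrable_exp_neg_norm_sub_sq_div ht x) (.of_forall fun y => ?_)
    exact mul_le_of_le_one_right (exp_nonneg _) (hf₁ y)
  calc heatSemigroup t f x ≤ (4 * π * t) ^ (-(finrank ℝ V : ℝ) / 2) *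
        (4 * π * t) ^ ((finrank ℝ V : ℝ) / 2) := by
        unfold heatSemigroup; gcongr
    _ = 1 := by rw [neg_div, rpow_neg_mul_rpow_self (by positivity)]

theorem heatSemigroup_le_rpow_neg_mul_integral {t : ℝ} (ht : 0 < t) {f : V → ℝ}
    (hf₀ : ∀ y, 0 ≤ f y) (hf : Integrable f) (x : V) :
    heatSemigroup t f x ≤
      (4 * π) ^ (-(finrank ℝ V : ℝ) / 2) * (∫ y, f y) * t ^ (-(finrank ℝ V : ℝ) / 2) := by
  have hint : ∫ y, exp (-‖x - y‖ ^ 2 / (4 * t)) * f y ≤ ∫ y, f y := by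
    refine integral_mono_of_nonneg (.of_forall fun y => mul_nonneg (exp_nonneg _) (hf₀ y)) hf
      (.of_forall fun y => mul_le_of_le_one_left (hf₀ y) (exp_le_one_iff.2 ?_))
    exact div_nonpos_of_nonpos_of_nonneg (neg_nonpos.2 (sq_nonneg _)) (by positivity)
  unfold heatSemigroup
  rw [mul_rpow (by positivity) ht.le]
  calc _ ≤ (4 * π) ^ (-(finrank ℝ V : ℝ) / 2) * t ^ (-(finrank ℝ V : ℝ) / 2) * ∫ y, f y := by
        gcongr
    _ = _ := by ring

theorem heatSemigroup_rpow_neg_one_add_norm_sq_le_one_add_rpow_neg {t b : ℝ} (ht : 0 < t)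
    (hb : (finrank ℝ V : ℝ) < b) (x : V) :
    heatSemigroup t (fun y => (1 + ‖y‖ ^ 2) ^ (-b / 2)) x ≤
      (1 + (4 * π) ^ (-(finrank ℝ V : ℝ) / 2) * ∫ y : V, (1 + ‖y‖ ^ 2) ^ (-b / 2)) *
        (2 ^ ((finrank ℝ V : ℝ) / 2) * (1 + t) ^ (-(finrank ℝ V : ℝ) / 2)) := by
  set d := (finrank ℝ V : ℝ)
  set D := (4 * π) ^ (-d / 2) * ∫ y : V, (1 + ‖y‖ ^ 2) ^ (-b / 2)
  have hD : 0 ≤ D := by positivity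
  have hs : 0 ≤ d / 2 := by positivity
  rcases le_total t 1 with ht₁ | ht₁
  · calc heatSemigroup t (fun y => (1 + ‖y‖ ^ 2) ^ (-b / 2)) x ≤ 1 := by
          refine heatSemigroup_le_one ht (fun y => by positivity) (fun y => ?_) x
          exact rpow_le_one_of_one_le_of_nonpos (by nlinarith) (by linarith)
      _ ≤ 2 ^ (d / 2) * (1 + t) ^ (-d / 2) := by
          rw [neg_div]; exact one_le_two_rpow_mul_one_add_rpow_neg (by linarith) ht₁ hs
      _ ≤ _ := le_mul_of_one_le_left (by positivity) (by linarith)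
  · calc heatSemigroup t (fun y => (1 + ‖y‖ ^ 2) ^ (-b / 2)) x ≤ D * t ^ (-d / 2) :=
          heatSemigroup_le_rpow_neg_mul_integral ht (fun y => by positivity)
            (integrable_rpow_neg_one_add_norm_sq hb) x
      _ ≤ D * (2 ^ (d / 2) * (1 + t) ^ (-d / 2)) := by
          gcongr
          rw [neg_div]; exact rpow_neg_le_two_rpow_mul_one_add_rpow_neg ht₁ hs
      _ ≤ _ := by gcongr; linarith

theorem heatSemigroup_rpow_neg_one_add_norm_sq_le_norm_rpow_neg_add {t b : ℝ} (ht : 0 < t)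
    (hb : (finrank ℝ V : ℝ) < b) (x : V) :
    heatSemigroup t (fun y => (1 + ‖y‖ ^ 2) ^ (-b / 2)) x ≤
      2 ^ b * ‖x‖ ^ (-b) +
        (4 * π) ^ (-(finrank ℝ V : ℝ) / 2) * (∫ y : V, (1 + ‖y‖ ^ 2) ^ (-b / 2)) *
          (t ^ (-(finrank ℝ V : ℝ) / 2) * exp (-‖x‖ ^ 2 / (16 * t))) := by
  set d := (finrank ℝ V : ℝ)
  set A := ∫ y : V, (1 + ‖y‖ ^ 2) ^ (-b / 2)
  set e := exp (-‖x‖ ^ 2 / (16 * t))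
  have hf : Integrable fun y : V => (1 + ‖y‖ ^ 2) ^ (-b / 2) :=
    integrable_rpow_neg_one_add_norm_sq hb
  have hG := integrable_exp_neg_norm_sub_sq_div ht x
  have hint : ∫ y, exp (-‖x - y‖ ^ 2 / (4 * t)) * (1 + ‖y‖ ^ 2) ^ (-b / 2) ≤
      2 ^ b * ‖x‖ ^ (-b) * (4 * π * t) ^ (d / 2) + e * A :=
    calc _ ≤ ∫ y, (2 ^ b * ‖x‖ ^ (-b) * exp (-‖x - y‖ ^ 2 / (4 * t)) +
            e * (1 + ‖y‖ ^ 2) ^ (-b / 2)) :=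
          integral_mono_of_nonneg (.of_forall fun y => by positivity)
            ((hG.const_mul _).add (hf.const_mul _))
            (.of_forall fun y => exp_mul_rpow_neg_one_add_norm_sq_le ht.le
              ((Nat.cast_nonneg _).trans hb.le) x y)
      _ = _ := by
          rw [integral_add (hG.const_mul _) (hf.const_mul _), integral_const_mul,
            integral_const_mul, integral_exp_neg_norm_sub_sq_div ht x]
  unfold heatSemigroup
  calc _ ≤ (4 * π * t) ^ (-d / 2) * (2 ^ b * ‖x‖ ^ (-b) * (4 * π * t) ^ (d / 2) + e * A) := by
        gcongr
    _ = 2 ^ b * ‖x‖ ^ (-b) * ((4 * π * t) ^ (-d / 2) * (4 * π * t) ^ (d / 2)) +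
          (4 * π) ^ (-d / 2) * A * (t ^ (-d / 2) * e) := by
        rw [mul_rpow (by positivity) ht.le]; ring
    _ = _ := by rw [neg_div, rpow_neg_mul_rpow_self (by positivity), mul_one]

end Heat

theorem heat_semigroup_on_polynomial_decay_general
    (n : ℕ) (b : ℝ) (hb : (n : ℝ) < b) :
    ∃ C > (0 : ℝ), ∀ t > (0 : ℝ), ∀ x : EuclideanSpace ℝ (Fin n),
      (‖x‖ ^ 2 ≤ 1 + t →
        (4 * Real.pi * t) ^ (-(n : ℝ) / 2) *
            ∫ y : EuclideanSpace ℝ (Fin n),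
              Real.exp (-‖x - y‖ ^ 2 / (4 * t)) * (1 + ‖y‖ ^ 2) ^ (-b / 2)
          ≤ C * (1 + t) ^ (-(n : ℝ) / 2)) ∧
      (1 + t < ‖x‖ ^ 2 →
        (4 * Real.pi * t) ^ (-(n : ℝ) / 2) *
            ∫ y : EuclideanSpace ℝ (Fin n),
              Real.exp (-‖x - y‖ ^ 2 / (4 * t)) * (1 + ‖y‖ ^ 2) ^ (-b / 2)
          ≤ C * (‖x‖ ^ (-b) + t ^ (-(n : ℝ) / 2) * Real.exp (-‖x‖ ^ 2 / (16 * t)))) := by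
  have hd : (finrank ℝ (EuclideanSpace ℝ (Fin n)) : ℝ) = n := by simp
  set D := (4 * π) ^ (-(n : ℝ) / 2) * ∫ y : EuclideanSpace ℝ (Fin n), (1 + ‖y‖ ^ 2) ^ (-b / 2)
    with hD_def
  have hD : 0 ≤ D := by positivity
  have h2n : 0 ≤ (1 + D) * 2 ^ ((n : ℝ) / 2) := by positivity
  have h2b : 0 ≤ (2 : ℝ) ^ b := by positivity
  refine ⟨(1 + D) * 2 ^ ((n : ℝ) / 2) + 2 ^ b + D, by positivity,
    fun t ht x => ⟨fun _ => ?_, fun _ => ?_⟩⟩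
  · have h := heatSemigroup_rpow_neg_one_add_norm_sq_le_one_add_rpow_neg ht (hd ▸ hb) x
    rw [heatSemigroup, hd, ← hD_def, ← mul_assoc] at h
    exact h.trans (by gcongr; linarith)
  · have h := heatSemigroup_rpow_neg_one_add_norm_sq_le_norm_rpow_neg_add ht (hd ▸ hb) x
    rw [heatSemigroup, hd, ← hD_def] at h
    refine h.trans ?_
    rw [mul_add]
    gcongr <;> linarith

/-- Action of the `n`-dimensional heat semigroup on the datum `⟨y⟩^{-b}` with
`b > n`: there is `C = C(n,b)` such that for all `t > 0` and `x ∈ ℝⁿ`,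
the convolution `(4πt)^{-n/2} ∫ e^{-|x-y|²/(4t)} (1+|y|²)^{-b/2} dy` is at most
`C (1+t)^{-n/2}` when `|x|² ≤ 1+t`, and at most
`C (|x|^{-b} + t^{-n/2} e^{-|x|²/(16t)})` when `|x|² > 1+t`. -/
theorem heat_semigroup_on_polynomial_decay
    (n : ℕ) (hn : 1 ≤ n) (b : ℝ) (hb : (n : ℝ) < b) :
    ∃ C > (0 : ℝ), ∀ t > (0 : ℝ), ∀ x : EuclideanSpace ℝ (Fin n),
      (‖x‖ ^ 2 ≤ 1 + t →
        (4 * Real.pi * t) ^ (-(n : ℝ) / 2) *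
            ∫ y : EuclideanSpace ℝ (Fin n),
              Real.exp (-‖x - y‖ ^ 2 / (4 * t)) * (1 + ‖y‖ ^ 2) ^ (-b / 2)
          ≤ C * (1 + t) ^ (-(n : ℝ) / 2)) ∧
      (1 + t < ‖x‖ ^ 2 →
        (4 * Real.pi * t) ^ (-(n : ℝ) / 2) *
            ∫ y : EuclideanSpace ℝ (Fin n),
              Real.exp (-‖x - y‖ ^ 2 / (4 * t)) * (1 + ‖y‖ ^ 2) ^ (-b / 2)
          ≤ C * (‖x‖ ^ (-b) + t ^ (-(n : ℝ) / 2) * Real.exp (-‖x‖ ^ 2 / (16 * t)))) :=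
  heat_semigroup_on_polynomial_decay_general n b hb
end
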